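/- (Theorem 1, part 1, ε-rank bound.) Let k, n, ω be positive integers, B ⊆ ℤ/kℤ with |B| ≤ ω, and let V = [v_1 … v_n] ∈ ℝ^{k×n} have unit-norm columns with supp(v̂_i) ⊆ B for all i. Let φ(x) = W2 ReLU(W1 x) + b with W1 ∈ ℝ^{m×k}, W2 ∈ ℝ^{d×m}, b ∈ ℝ^d, and suppose there are constants c > 0 and C ≥ 0 such that ‖φ(V)‖_2 ≥ c ‖W2‖_2 ‖W1‖_2 ‖V‖_2 and ‖b 1_nᵀ‖_F ≤ C ‖W2 ReLU(W1 V)‖_F. Then for every 0 < ε ≤ 1, rank_ε(φ(V)) ≤ ((1 + C)/c)² · ε^{-2} · ω. -/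

import Mathlib

open MeasureTheory ProbabilityTheory
open scoped NNReal ENNReal

/-- The discrete Fourier transform of `x ∈ ℝ^k` (given here with complex values),
viewed as a function on `ℤ/kℤ`. -/
noncomputable def dft (k : ℕ) (x : Fin k → ℂ) : ZMod k → ℂ := fun j =>
  ∑ t : Fin k, Complex.exp (-2 * Real.pi * Complex.I * (ZMod.val j : ℂ) * ((t : ℕ) : ℂ) / (k : ℂ)) * x t

/-- The spectral norm (largest singular value) of a real matrix. -/
noncomputable def specNorm {p q : ℕ} (A : Matrix (Fin p) (Fin q) ℝ) : ℝ :=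
  ‖LinearMap.toContinuousLinearMap (Matrix.toEuclideanLin A)‖

/-- The Frobenius norm of a real matrix. -/
noncomputable def frobNorm {p q : ℕ} (A : Matrix (Fin p) (Fin q) ℝ) : ℝ :=
  Real.sqrt (∑ i, ∑ j, (A i j) ^ 2)

/-- The singular values of a real matrix: square roots of the eigenvalues of `Aᴴ * A`. -/
noncomputable def singVal {p q : ℕ} (A : Matrix (Fin p) (Fin q) ℝ) (j : Fin q) : ℝ :=
  Real.sqrt ((Matrix.isHermitian_conjTranspose_mul_self A).eigenvalues j)

/-- The ε-rank of a real matrix: the number of singular values `σ_j` with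
`σ_j > ε σ_1`, where `σ_1 = ‖A‖₂` is the largest singular value. -/
noncomputable def epsRank {p q : ℕ} (ε : ℝ) (A : Matrix (Fin p) (Fin q) ℝ) : ℕ :=
  (Finset.univ.filter fun j : Fin q => ε * specNorm A < singVal A j).card

open scoped Matrix

lemma norm_mulVec_le {p q : ℕ} (A : Matrix (Fin p) (Fin q) ℝ) (x : Fin q → ℝ) :
    Real.sqrt (∑ i, (A.mulVec x i)^2) ≤ specNorm A * Real.sqrt (∑ j, (x j)^2) := by
  have h := (LinearMap.toContinuousLinearMap (Matrix.toEuclideanLin A)).le_opNorm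
      ((WithLp.equiv 2 (Fin q → ℝ)).symm x)
  simp only [LinearMap.coe_toContinuousLinearMap', WithLp.equiv_symm_apply, Matrix.toEuclideanLin_apply_piLp_toLp,
    EuclideanSpace.norm_eq, PiLp.toLp_apply, Real.norm_eq_abs, sq_abs] at h
  exact h

lemma frobNorm_nonneg {p q : ℕ} (A : Matrix (Fin p) (Fin q) ℝ) : 0 ≤ frobNorm A :=
  Real.sqrt_nonneg _

lemma frobNorm_sq {p q : ℕ} (A : Matrix (Fin p) (Fin q) ℝ) :
    frobNorm A ^ 2 = ∑ i, ∑ j, (A i j) ^ 2 :=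
  Real.sq_sqrt (Finset.sum_nonneg fun i _ => Finset.sum_nonneg fun j _ => sq_nonneg _)

lemma frobNorm_eq_zero {p q : ℕ} {A : Matrix (Fin p) (Fin q) ℝ} (h : frobNorm A = 0) :
    A = 0 := by
  have h2 : ∑ i, ∑ j, (A i j) ^ 2 = 0 := by
    have := congrArg (· ^ 2) h
    simpa [frobNorm_sq] using this
  ext i j
  have hi := (Finset.sum_eq_zero_iff_of_nonneg
      (fun i _ => Finset.sum_nonneg fun j _ => sq_nonneg (A i j))).1 h2 i (Finset.mem_univ i)
  have hj := (Finset.sum_eq_zero_iff_of_nonneg (fun j _ => sq_nonneg (A i j))).1 hi j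
      (Finset.mem_univ j)
  simpa using pow_eq_zero_iff (n := 2) (by norm_num) |>.1 hj

lemma specNorm_zero {p q : ℕ} : specNorm (0 : Matrix (Fin p) (Fin q) ℝ) = 0 := by
  simp [specNorm]

-- triangle inequality, via EuclideanSpace on the product index
lemma frobNorm_add_le {p q : ℕ} (A B : Matrix (Fin p) (Fin q) ℝ) :
    frobNorm (A + B) ≤ frobNorm A + frobNorm B := by
  have key : ∀ M : Matrix (Fin p) (Fin q) ℝ,
      frobNorm M = ‖(WithLp.equiv 2 (Fin p × Fin q → ℝ)).symm (fun ij => M ij.1 ij.2)‖ := by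
    intro M
    rw [EuclideanSpace.norm_eq]
    simp [frobNorm, Real.norm_eq_abs, sq_abs, Fintype.sum_prod_type]
  rw [key, key, key]
  have : ((WithLp.equiv 2 (Fin p × Fin q → ℝ)).symm (fun ij => (A + B) ij.1 ij.2)) =
      ((WithLp.equiv 2 (Fin p × Fin q → ℝ)).symm (fun ij => A ij.1 ij.2)) +
      ((WithLp.equiv 2 (Fin p × Fin q → ℝ)).symm (fun ij => B ij.1 ij.2)) := by
    ext ij
    simp [Matrix.add_apply]
  rw [this]
  exact norm_add_le _ _

lemma frobNorm_map_relu_le {p q : ℕ} (A : Matrix (Fin p) (Fin q) ℝ) :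
    frobNorm (A.map (fun t => max t 0)) ≤ frobNorm A := by
  apply Real.sqrt_le_sqrt
  apply Finset.sum_le_sum; intro i _
  apply Finset.sum_le_sum; intro j _
  simp only [Matrix.map_apply]
  rcases le_total (A i j) 0 with h | h
  · simp [max_eq_right h, sq_nonneg]
  · simp [max_eq_left h]

lemma frobNorm_mul_le {p q r : ℕ} (W : Matrix (Fin p) (Fin q) ℝ)
    (M : Matrix (Fin q) (Fin r) ℝ) :
    frobNorm (W * M) ≤ specNorm W * frobNorm M := by
  have hsq : frobNorm (W * M) ^ 2 ≤ (specNorm W * frobNorm M) ^ 2 := by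
    rw [frobNorm_sq, mul_pow, frobNorm_sq]
    rw [Finset.sum_comm]
    have hcol : ∀ j : Fin r, ∑ i, ((W * M) i j) ^ 2 ≤ specNorm W ^ 2 * ∑ t, (M t j) ^ 2 := by
      intro j
      have h := norm_mulVec_le W (fun t => M t j)
      have h2 := mul_self_le_mul_self (Real.sqrt_nonneg _) h
      rw [Real.mul_self_sqrt (Finset.sum_nonneg fun i _ => sq_nonneg _)] at h2
      calc ∑ i, ((W * M) i j) ^ 2 = ∑ i, (W.mulVec (fun t => M t j) i) ^ 2 := by
            apply Finset.sum_congr rfl; intro i _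
            simp [Matrix.mul_apply, Matrix.mulVec, dotProduct]
        _ ≤ (specNorm W * Real.sqrt (∑ t, (M t j) ^ 2)) *
            (specNorm W * Real.sqrt (∑ t, (M t j) ^ 2)) := by
            simpa [sq] using h2
        _ = specNorm W ^ 2 * ∑ t, (M t j) ^ 2 := by
            rw [mul_mul_mul_comm, Real.mul_self_sqrt
              (Finset.sum_nonneg fun t _ => sq_nonneg _)]
            ring
    calc ∑ j, ∑ i, ((W * M) i j) ^ 2 ≤ ∑ j, specNorm W ^ 2 * ∑ t, (M t j) ^ 2 :=
          Finset.sum_le_sum fun j _ => hcol j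
      _ = specNorm W ^ 2 * ∑ i, ∑ j, (M i j) ^ 2 := by
          rw [← Finset.mul_sum, Finset.sum_comm]
  have h1 : 0 ≤ specNorm W * frobNorm M :=
    mul_nonneg (norm_nonneg _) (frobNorm_nonneg _)
  nlinarith [frobNorm_nonneg (W * M)]


-- eigenvalues of AᵀA are ≤ specNorm², using a unit eigenvector
lemma eigenvalue_le_sq {p q : ℕ} (A : Matrix (Fin p) (Fin q) ℝ) (j : Fin q) :
    (Matrix.isHermitian_conjTranspose_mul_self A).eigenvalues j ≤ specNorm A ^ 2 := by
  set hA := Matrix.isHermitian_conjTranspose_mul_self A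
  set u : EuclideanSpace ℝ (Fin q) := hA.eigenvectorBasis j with hu
  set v : Fin q → ℝ := fun t => u t with hv
  have hnorm : ‖u‖ = 1 := hA.eigenvectorBasis.orthonormal.1 j
  have hsum : ∑ t, (v t)^2 = 1 := by
    rw [EuclideanSpace.norm_eq, Real.sqrt_eq_one] at hnorm
    simpa [Real.norm_eq_abs, sq_abs] using hnorm
  have heig : (Aᵀ * A) *ᵥ v = hA.eigenvalues j • v := hA.mulVec_eigenvectorBasis j
  have key : hA.eigenvalues j = ∑ i, ((A *ᵥ v) i) ^ 2 := by
    have h1 : v ⬝ᵥ ((Aᵀ * A) *ᵥ v) = hA.eigenvalues j := by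
      rw [heig, dotProduct_smul]
      simp only [smul_eq_mul]
      rw [show v ⬝ᵥ v = ∑ t, (v t)^2 by simp [dotProduct, sq], hsum, mul_one]
    have h2 : v ⬝ᵥ ((Aᵀ * A) *ᵥ v) = (A *ᵥ v) ⬝ᵥ (A *ᵥ v) := by
      rw [← Matrix.mulVec_mulVec, Matrix.dotProduct_mulVec, Matrix.vecMul_transpose]
    rw [← h1, h2]
    simp [dotProduct, sq]
  have hle := norm_mulVec_le A v
  rw [hsum, Real.sqrt_one, mul_one] at hle
  have h0 : Real.sqrt (∑ i, ((A *ᵥ v) i) ^ 2) ^ 2 ≤ specNorm A ^ 2 :=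
    pow_le_pow_left₀ (Real.sqrt_nonneg _) hle 2
  rwa [Real.sq_sqrt (Finset.sum_nonneg fun i _ => sq_nonneg _), ← key] at h0

lemma singVal_le_specNorm {p q : ℕ} (A : Matrix (Fin p) (Fin q) ℝ) (j : Fin q) :
    singVal A j ≤ specNorm A := by
  have h := eigenvalue_le_sq A j
  have := Real.sqrt_le_sqrt h
  rwa [Real.sqrt_sq (show (0:ℝ) ≤ specNorm A from norm_nonneg _)] at this

lemma sum_eigenvalues_eq_trace {q : ℕ} (A : Matrix (Fin q) (Fin q) ℝ) (hA : A.IsHermitian) :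
    ∑ j, hA.eigenvalues j = A.trace := by
  rw [hA.trace_eq_sum_eigenvalues]
  simp


lemma zmod_sum_eq {k : ℕ} [NeZero k] (g : ℕ → ℂ) :
    ∑ j : ZMod k, g (ZMod.val j) = ∑ a ∈ Finset.range k, g a := by
  refine Finset.sum_bij' (fun j _ => ZMod.val j) (fun a _ => (a : ZMod k)) ?_ ?_ ?_ ?_ ?_
  · intro j _; exact Finset.mem_range.2 (ZMod.val_lt j)
  · intro a _; exact Finset.mem_univ _
  · intro j _; exact ZMod.natCast_rightInverse j
  · intro a ha; exact ZMod.val_cast_of_lt (Finset.mem_range.1 ha)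
  · intro j _; rfl

lemma orthogonality {k : ℕ} [NeZero k] (s t : Fin k) :
    ∑ j : ZMod k, Complex.exp (2 * Real.pi * Complex.I * (ZMod.val j : ℂ) *
      (((s : ℕ) : ℂ) - ((t : ℕ) : ℂ)) / (k : ℂ)) = if s = t then (k : ℂ) else 0 := by
  have hk : 0 < k := Nat.pos_of_ne_zero (NeZero.ne k)
  have hkc : (k : ℂ) ≠ 0 := Nat.cast_ne_zero.2 hk.ne'
  set w : ℂ := Complex.exp (2 * Real.pi * Complex.I * (((s : ℕ) : ℂ) - ((t : ℕ) : ℂ)) / (k : ℂ))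
    with hw
  have hterm : ∀ j : ZMod k, Complex.exp (2 * Real.pi * Complex.I * (ZMod.val j : ℂ) *
      (((s : ℕ) : ℂ) - ((t : ℕ) : ℂ)) / (k : ℂ)) = w ^ (ZMod.val j) := by
    intro j
    rw [hw, ← Complex.exp_nat_mul]
    ring_nf
  rw [Finset.sum_congr rfl fun j _ => hterm j, zmod_sum_eq (fun a => w ^ a)]
  by_cases hst : s = t
  · rw [if_pos hst]
    have hw1 : w = 1 := by rw [hw, hst]; simp
    simp [hw1]
  · rw [if_neg hst]
    have hw1 : w ≠ 1 := by
      rw [hw]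
      intro hcontra
      rw [Complex.exp_eq_one_iff] at hcontra
      obtain ⟨m, hm⟩ := hcontra
      rw [div_eq_iff hkc] at hm
      have h2 : (2 * Real.pi * Complex.I : ℂ) ≠ 0 := by
        simp [Complex.I_ne_zero, Real.pi_ne_zero, Complex.ofReal_ne_zero]
      have hC : (((s : ℕ) : ℂ) - ((t : ℕ) : ℂ)) = (m : ℂ) * (k : ℂ) :=
        mul_left_cancel₀ h2 (by linear_combination hm)
      have hre : ((s : ℕ) : ℝ) - ((t : ℕ) : ℝ) = (m : ℝ) * (k : ℝ) := by
        have := congrArg Complex.re hC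
        simpa using this
      have hm0 : m ≠ 0 := by
        intro h0
        rw [h0] at hre
        norm_num [sub_eq_zero] at hre
        have hnat : (s : ℕ) = (t : ℕ) := by exact_mod_cast hre
        exact hst (Fin.val_injective hnat)
      have habs : (1 : ℝ) ≤ |(m : ℝ)| := by
        have := Int.one_le_abs hm0
        calc (1:ℝ) = ((1:ℤ):ℝ) := by norm_num
          _ ≤ ((|m| : ℤ) : ℝ) := by exact_mod_cast this
          _ = |(m:ℝ)| := by push_cast; rfl
      have hsk : ((s : ℕ) : ℝ) < k := by exact_mod_cast s.2
      have htk : ((t : ℕ) : ℝ) < k := by exact_mod_cast t.2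
      have hs0 : (0:ℝ) ≤ ((s : ℕ) : ℝ) := Nat.cast_nonneg _
      have ht0 : (0:ℝ) ≤ ((t : ℕ) : ℝ) := Nat.cast_nonneg _
      have hlt : |((s : ℕ) : ℝ) - ((t : ℕ) : ℝ)| < (k : ℝ) := by
        rw [abs_sub_lt_iff]; constructor <;> linarith
      rw [hre, abs_mul, abs_of_nonneg (by positivity : (0:ℝ) ≤ (k:ℝ))] at hlt
      have hkR : (0:ℝ) < (k:ℝ) := by exact_mod_cast hk
      nlinarith
    have hwk : w ^ k = 1 := by
      rw [hw, ← Complex.exp_nat_mul]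
      have harg : (k : ℂ) * (2 * Real.pi * Complex.I * (((s : ℕ) : ℂ) - ((t : ℕ) : ℂ)) / (k : ℂ))
          = ((((s : ℕ) : ℤ) - ((t : ℕ) : ℤ) : ℤ) : ℂ) * (2 * Real.pi * Complex.I) := by
        push_cast
        field_simp
      rw [harg]
      exact Complex.exp_int_mul_two_pi_mul_I _
    rw [geom_sum_eq hw1, hwk]
    simp

lemma dft_injective {k : ℕ} [NeZero k] (x : Fin k → ℂ) (h : ∀ j, dft k x j = 0) :
    ∀ s, x s = 0 := by
  intro s
  have hk : 0 < k := Nat.pos_of_ne_zero (NeZero.ne k)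
  have hkc : (k : ℂ) ≠ 0 := Nat.cast_ne_zero.2 hk.ne'
  have hS : ∑ j : ZMod k, dft k x j *
      Complex.exp (2 * Real.pi * Complex.I * (ZMod.val j : ℂ) * ((s : ℕ) : ℂ) / (k : ℂ)) = 0 := by
    apply Finset.sum_eq_zero; intro j _; rw [h j, zero_mul]
  have hS2 : ∑ j : ZMod k, dft k x j *
      Complex.exp (2 * Real.pi * Complex.I * (ZMod.val j : ℂ) * ((s : ℕ) : ℂ) / (k : ℂ))
      = (k : ℂ) * x s := by
    unfold dft
    calc ∑ j : ZMod k, (∑ t : Fin k,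
          Complex.exp (-2 * Real.pi * Complex.I * (ZMod.val j : ℂ) * ((t : ℕ) : ℂ) / (k : ℂ)) * x t) *
          Complex.exp (2 * Real.pi * Complex.I * (ZMod.val j : ℂ) * ((s : ℕ) : ℂ) / (k : ℂ))
        = ∑ t : Fin k, (∑ j : ZMod k, Complex.exp (2 * Real.pi * Complex.I * (ZMod.val j : ℂ) *
            (((s : ℕ) : ℂ) - ((t : ℕ) : ℂ)) / (k : ℂ))) * x t := by
          simp only [Finset.sum_mul]
          rw [Finset.sum_comm]
          apply Finset.sum_congr rfl; intro t _
          apply Finset.sum_congr rfl; intro j _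
          rw [mul_right_comm, ← Complex.exp_add]
          congr 2
          field_simp
          ring
      _ = ∑ t : Fin k, (if s = t then (k : ℂ) else 0) * x t := by
          apply Finset.sum_congr rfl; intro t _; rw [orthogonality]
      _ = (k : ℂ) * x s := by
          simp only [ite_mul, zero_mul]
          rw [Finset.sum_ite_eq]
          simp
  rw [hS2] at hS
  exact (mul_eq_zero.1 hS).resolve_left hkc

lemma dft_conj_neg {k : ℕ} [NeZero k] (x : Fin k → ℝ) (j : ZMod k) :
    dft k (fun t => (x t : ℂ)) (-j) = starRingEnd ℂ (dft k (fun t => (x t : ℂ)) j) := by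
  have hk : 0 < k := Nat.pos_of_ne_zero (NeZero.ne k)
  have hkc : (k : ℂ) ≠ 0 := Nat.cast_ne_zero.2 hk.ne'
  unfold dft
  rw [map_sum]
  apply Finset.sum_congr rfl
  intro t _
  rw [map_mul, Complex.conj_ofReal]
  congr 1
  rw [← Complex.exp_conj]
  by_cases hj : j = 0
  · subst hj; simp
  · refine Complex.exp_eq_exp_iff_exists_int.2 ⟨-((t : ℕ) : ℤ), ?_⟩
    have hval : ((ZMod.val (-j) : ℕ) : ℂ) = (k : ℂ) - ((ZMod.val j : ℕ) : ℂ) := by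
      rw [ZMod.neg_val, if_neg hj]
      push_cast [Nat.cast_sub (ZMod.val_lt j).le]
      ring
    rw [hval]
    simp only [map_div₀, map_mul, map_neg, Complex.conj_I, Complex.conj_ofReal,
      Complex.conj_natCast, map_ofNat]
    field_simp
    push_cast
    ring


lemma dft_add {k : ℕ} (x y : Fin k → ℝ) (j : ZMod k) :
    dft k (fun t => ((x t + y t : ℝ) : ℂ)) j
      = dft k (fun t => (x t : ℂ)) j + dft k (fun t => (y t : ℂ)) j := by
  unfold dft
  rw [← Finset.sum_add_distrib]
  apply Finset.sum_congr rfl; intro t _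
  push_cast
  ring

lemma dft_smul {k : ℕ} (r : ℝ) (x : Fin k → ℝ) (j : ZMod k) :
    dft k (fun t => ((r * x t : ℝ) : ℂ)) j = (r : ℂ) * dft k (fun t => (x t : ℂ)) j := by
  unfold dft
  rw [Finset.mul_sum]
  apply Finset.sum_congr rfl; intro t _
  push_cast
  ring

lemma dft_zero {k : ℕ} (j : ZMod k) : dft k (fun _ => ((0 : ℝ) : ℂ)) j = 0 := by
  unfold dft; simp

lemma rank_le_of_bandlimited {k n : ℕ} [NeZero k] (B : Finset (ZMod k))
    (V : Matrix (Fin k) (Fin n) ℝ)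
    (hsupp : ∀ i, ∀ j ∉ B, dft k (fun t => ((V t i : ℝ) : ℂ)) j = 0) :
    V.rank ≤ B.card := by
  classical
  set D : (Fin k → ℝ) → ZMod k → ℂ := fun x => dft k (fun t => (x t : ℂ)) with hD
  let U : Submodule ℝ (Fin k → ℝ) :=
    { carrier := {x | ∀ j ∉ B, D x j = 0}
      add_mem' := by
        intro x y hx hy j hj
        have : D (x + y) j = D x j + D y j := dft_add x y j
        rw [this, hx j hj, hy j hj, add_zero]
      zero_mem' := by intro j _; exact dft_zero j
      smul_mem' := by
        intro r x hx j hj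
        have : D (r • x) j = (r : ℂ) * D x j := dft_smul r x j
        rw [this, hx j hj, mul_zero] }
  let L : (Fin k → ℝ) →ₗ[ℝ] (B → ℝ) :=
    { toFun := fun x => fun j => (D x (j : ZMod k)).re + (D x (j : ZMod k)).im
      map_add' := by
        intro x y; funext j
        have : D (x + y) (j : ZMod k) = D x j + D y j := dft_add x y j
        simp [this]
        ring
      map_smul' := by
        intro r x; funext j
        have : D (r • x) (j : ZMod k) = (r : ℂ) * D x j := dft_smul r x j
        simp [this, Complex.mul_re, Complex.mul_im]
        ring }
  -- injectivity of L restricted to U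
  have hinj : ∀ x ∈ U, L x = 0 → x = 0 := by
    intro x hx hLx
    have hall : ∀ j : ZMod k, D x j = 0 := by
      intro j
      by_cases hjB : j ∈ B
      · have h1 : (D x j).re + (D x j).im = 0 := congrFun hLx ⟨j, hjB⟩
        by_cases hnB : -j ∈ B
        · have h2 : (D x (-j)).re + (D x (-j)).im = 0 := congrFun hLx ⟨-j, hnB⟩
          have hc : D x (-j) = starRingEnd ℂ (D x j) := dft_conj_neg x j
          rw [hc] at h2
          simp only [Complex.conj_re, Complex.conj_im] at h2
          apply Complex.ext <;> simp <;> linarith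
        · have h2 : D x (-j) = 0 := hx (-j) hnB
          have hc : D x (-j) = starRingEnd ℂ (D x j) := dft_conj_neg x j
          rw [hc] at h2
          simpa using congrArg (starRingEnd ℂ) h2
      · exact hx j hjB
    have := dft_injective (fun t => (x t : ℂ)) hall
    funext s
    have hs := this s
    simpa using hs
  -- columns of V lie in U
  rw [Matrix.rank_eq_finrank_span_cols]
  have hle : Submodule.span ℝ (Set.range Vᵀ) ≤ U := by
    rw [Submodule.span_le]
    rintro _ ⟨i, rfl⟩
    intro j hj
    exact hsupp i j hj
  have h1 : Module.finrank ℝ (Submodule.span ℝ (Set.range Vᵀ)) ≤ Module.finrank ℝ U :=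
    Submodule.finrank_mono hle
  have h2 : Module.finrank ℝ U ≤ Module.finrank ℝ (B → ℝ) := by
    apply LinearMap.finrank_le_finrank_of_injective (f := L.domRestrict U)
    rw [← LinearMap.ker_eq_bot, LinearMap.ker_eq_bot']
    rintro ⟨x, hxU⟩ hLx
    have hLx' : L x = 0 := hLx
    exact Subtype.ext (hinj x hxU hLx')
  have h3 : Module.finrank ℝ (B → ℝ) = B.card := by
    rw [Module.finrank_fintype_fun_eq_card]
    exact Fintype.card_coe B
  exact (h1.trans h2).trans h3.le

-- sum of squared singular values equals squared Frobenius norm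
lemma sum_eigs_eq_frob_sq {p q : ℕ} (A : Matrix (Fin p) (Fin q) ℝ) :
    ∑ j, (Matrix.isHermitian_conjTranspose_mul_self A).eigenvalues j = frobNorm A ^ 2 := by
  rw [sum_eigenvalues_eq_trace _ (Matrix.isHermitian_conjTranspose_mul_self A), frobNorm_sq]
  rw [Matrix.trace]
  rw [Finset.sum_comm]
  apply Finset.sum_congr rfl; intro i _
  simp [Matrix.diag, Matrix.mul_apply, Matrix.conjTranspose_apply, sq, Finset.mul_sum]

lemma eig_nonneg {p q : ℕ} (A : Matrix (Fin p) (Fin q) ℝ) (j : Fin q) :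
    0 ≤ (Matrix.isHermitian_conjTranspose_mul_self A).eigenvalues j :=
  (Matrix.posSemidef_conjTranspose_mul_self A).eigenvalues_nonneg j

lemma singVal_sq {p q : ℕ} (A : Matrix (Fin p) (Fin q) ℝ) (j : Fin q) :
    singVal A j ^ 2 = (Matrix.isHermitian_conjTranspose_mul_self A).eigenvalues j :=
  Real.sq_sqrt (eig_nonneg A j)

-- ε-rank bound from Frobenius norm
lemma epsRank_mul_le {p q : ℕ} (ε : ℝ) (hε : 0 < ε) (A : Matrix (Fin p) (Fin q) ℝ) :
    (epsRank ε A : ℝ) * (ε * specNorm A) ^ 2 ≤ frobNorm A ^ 2 := by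
  classical
  set F := Finset.univ.filter fun j : Fin q => ε * specNorm A < singVal A j with hF
  have h1 : (F.card : ℝ) * (ε * specNorm A) ^ 2 ≤ ∑ j ∈ F, singVal A j ^ 2 := by
    have := Finset.card_nsmul_le_sum F (fun j => singVal A j ^ 2) ((ε * specNorm A) ^ 2) ?_
    · simpa [nsmul_eq_mul] using this
    · intro j hj
      have hjlt : ε * specNorm A < singVal A j := (Finset.mem_filter.1 hj).2
      have h0 : 0 ≤ ε * specNorm A := mul_nonneg hε.le (norm_nonneg _)
      exact pow_le_pow_left₀ h0 hjlt.le 2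
  have h2 : ∑ j ∈ F, singVal A j ^ 2 ≤ ∑ j, singVal A j ^ 2 := by
    apply Finset.sum_le_sum_of_subset_of_nonneg (Finset.filter_subset _ _)
    intro j _ _; exact sq_nonneg _
  have h3 : ∑ j, singVal A j ^ 2 = frobNorm A ^ 2 := by
    rw [← sum_eigs_eq_frob_sq]
    exact Finset.sum_congr rfl fun j _ => singVal_sq A j
  calc (epsRank ε A : ℝ) * (ε * specNorm A) ^ 2 = (F.card : ℝ) * (ε * specNorm A) ^ 2 := rfl
    _ ≤ ∑ j ∈ F, singVal A j ^ 2 := h1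
    _ ≤ ∑ j, singVal A j ^ 2 := h2
    _ = frobNorm A ^ 2 := h3

lemma epsRank_eq_zero {p q : ℕ} (ε : ℝ) (hε : 0 < ε) (A : Matrix (Fin p) (Fin q) ℝ)
    (hA : specNorm A = 0) : epsRank ε A = 0 := by
  classical
  unfold epsRank
  rw [Finset.card_eq_zero, Finset.filter_eq_empty_iff]
  intro j _
  rw [hA, mul_zero]
  push_neg
  have := singVal_le_specNorm A j
  rw [hA] at this
  exact this

-- n ≤ ω * specNorm V ^ 2 for bandlimited unit-norm columns
lemma card_le_omega_spec {k n : ℕ} [NeZero k] (ω : ℕ) (B : Finset (ZMod k)) (hB : B.card ≤ ω)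
    (V : Matrix (Fin k) (Fin n) ℝ)
    (hunit : ∀ i : Fin n, ∑ t, (V t i) ^ 2 = 1)
    (hsupp : ∀ i, ∀ j ∉ B, dft k (fun t => ((V t i : ℝ) : ℂ)) j = 0) :
    (n : ℝ) ≤ (ω : ℝ) * specNorm V ^ 2 := by
  classical
  set hA := Matrix.isHermitian_conjTranspose_mul_self V
  have hsum : ∑ j, hA.eigenvalues j = (n : ℝ) := by
    rw [sum_eigs_eq_frob_sq, frobNorm_sq, Finset.sum_comm]
    rw [Finset.sum_congr rfl fun i (_ : i ∈ Finset.univ) => hunit i]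
    simp
  have hrank : (Vᴴ * V).rank = V.rank := Matrix.rank_conjTranspose_mul_self V
  have hrankV : V.rank ≤ B.card := rank_le_of_bandlimited B V hsupp
  have hcard : Fintype.card {i // hA.eigenvalues i ≠ 0} ≤ ω := by
    rw [← hA.rank_eq_card_non_zero_eigs]
    calc (Vᴴ * V).rank = V.rank := hrank
      _ ≤ B.card := hrankV
      _ ≤ ω := hB
  have hfilter : (Finset.univ.filter fun i => hA.eigenvalues i ≠ 0).card ≤ ω := by
    rw [← Fintype.card_subtype]
    exact hcard
  have heach : ∀ j, hA.eigenvalues j ≤ specNorm V ^ 2 := eigenvalue_le_sq V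
  calc (n : ℝ) = ∑ j, hA.eigenvalues j := hsum.symm
    _ = ∑ j ∈ Finset.univ.filter fun i => hA.eigenvalues i ≠ 0, hA.eigenvalues j :=
        (Finset.sum_filter_ne_zero _).symm
    _ ≤ (Finset.univ.filter fun i => hA.eigenvalues i ≠ 0).card • (specNorm V ^ 2) :=
        Finset.sum_le_card_nsmul _ _ _ (fun j _ => heach j)
    _ = ((Finset.univ.filter fun i => hA.eigenvalues i ≠ 0).card : ℝ) * specNorm V ^ 2 := by
        rw [nsmul_eq_mul]
    _ ≤ (ω : ℝ) * specNorm V ^ 2 := by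
        apply mul_le_mul_of_nonneg_right _ (sq_nonneg _)
        exact_mod_cast hfilter

/-- Theorem 1, part 1, ε-rank bound. -/
theorem epsRank_bound_of_bandlimited
    (k n ω m d : ℕ) (hk : 0 < k) (hn : 0 < n) (hω : 0 < ω)
    (B : Finset (ZMod k)) (hB : B.card ≤ ω)
    (V : Matrix (Fin k) (Fin n) ℝ)
    (hunit : ∀ i : Fin n, ∑ t, (V t i) ^ 2 = 1)
    (hsupp : ∀ i : Fin n,
      Function.support (dft k fun t => ((V t i : ℝ) : ℂ)) ⊆ (B : Set (ZMod k)))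
    (W1 : Matrix (Fin m) (Fin k) ℝ) (W2 : Matrix (Fin d) (Fin m) ℝ) (b : Fin d → ℝ)
    (c C : ℝ) (hc : 0 < c) (hC : 0 ≤ C)
    -- `φV` is the matrix with columns `φ(v_i) = W₂ ReLU(W₁ v_i) + b`
    (φV : Matrix (Fin d) (Fin n) ℝ)
    (hφV : φV = W2 * (W1 * V).map (fun t => max t 0) + Matrix.of fun i _ => b i)
    (hlow : c * (specNorm W2 * specNorm W1 * specNorm V) ≤ specNorm φV)
    (hb : frobNorm (Matrix.of fun (i : Fin d) (_ : Fin n) => b i) ≤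
          C * frobNorm (W2 * (W1 * V).map (fun t => max t 0))) :
    ∀ ε : ℝ, 0 < ε → ε ≤ 1 →
      (epsRank ε φV : ℝ) ≤ ((1 + C) / c) ^ 2 * ε⁻¹ ^ 2 * ω := by
  intro ε hε hε1
  haveI : NeZero k := ⟨hk.ne'⟩
  have hsupp' : ∀ i, ∀ j ∉ B, dft k (fun t => ((V t i : ℝ) : ℂ)) j = 0 := by
    intro i j hj
    by_contra hne
    exact hj (hsupp i hne)
  set S1 := specNorm φV with hS1def
  set Q2 := specNorm W2
  set Q1 := specNorm W1
  set SV := specNorm V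
  set R := frobNorm (W2 * (W1 * V).map (fun t => max t 0)) with hRdef
  have hQ2 : 0 ≤ Q2 := norm_nonneg _
  have hQ1 : 0 ≤ Q1 := norm_nonneg _
  have hSV : 0 ≤ SV := norm_nonneg _
  have hS1 : 0 ≤ S1 := norm_nonneg _
  have hR0 : 0 ≤ R := frobNorm_nonneg _
  have hkey : (n : ℝ) ≤ (ω : ℝ) * SV ^ 2 := card_le_omega_spec ω B hB V hunit hsupp'
  have hfrobV : frobNorm V ^ 2 = (n : ℝ) := by
    rw [frobNorm_sq, Finset.sum_comm]
    rw [Finset.sum_congr rfl fun i (_ : i ∈ Finset.univ) => hunit i]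
    simp
  have hR : R ≤ (Q2 * Q1) * frobNorm V := by
    have h1 : R ≤ Q2 * frobNorm ((W1 * V).map (fun t => max t 0)) := frobNorm_mul_le _ _
    have h2 : frobNorm ((W1 * V).map (fun t => max t 0)) ≤ frobNorm (W1 * V) :=
      frobNorm_map_relu_le _
    have h3 : frobNorm (W1 * V) ≤ Q1 * frobNorm V := frobNorm_mul_le _ _
    calc R ≤ Q2 * frobNorm ((W1 * V).map (fun t => max t 0)) := h1
      _ ≤ Q2 * frobNorm (W1 * V) := mul_le_mul_of_nonneg_left h2 hQ2
      _ ≤ Q2 * (Q1 * frobNorm V) := mul_le_mul_of_nonneg_left h3 hQ2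
      _ = (Q2 * Q1) * frobNorm V := by ring
  have hF : frobNorm φV ≤ (1 + C) * R := by
    rw [hφV]
    calc frobNorm (W2 * (W1 * V).map (fun t => max t 0) + Matrix.of fun i _ => b i)
        ≤ R + frobNorm (Matrix.of fun (i : Fin d) (_ : Fin n) => b i) := frobNorm_add_le _ _
      _ ≤ R + C * R := by linarith
      _ = (1 + C) * R := by ring
  by_cases hS10 : S1 = 0
  · rw [epsRank_eq_zero ε hε φV hS10]
    have : (0 : ℝ) ≤ ((1 + C) / c) ^ 2 * ε⁻¹ ^ 2 * ω := by positivity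
    simpa using this
  · have hS1pos : 0 < S1 := lt_of_le_of_ne hS1 (Ne.symm hS10)
    have hSVpos : 0 < SV := by
      rcases lt_or_ge 0 SV with h | h
      · exact h
      · exfalso
        have hSV0 : SV = 0 := le_antisymm h hSV
        rw [hSV0] at hkey
        have : (1 : ℝ) ≤ (n : ℝ) := by exact_mod_cast hn
        simp at hkey
        linarith
    have hQpos : 0 < Q2 * Q1 := by
      rcases lt_or_ge 0 (Q2 * Q1) with h | h
      · exact h
      · exfalso
        have hQ0 : Q2 * Q1 = 0 := le_antisymm h (mul_nonneg hQ2 hQ1)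
        have hRz : R ≤ 0 := by
          have := hR
          rw [hQ0, zero_mul] at this
          exact this
        have hRzz : R = 0 := le_antisymm hRz hR0
        have hFz : frobNorm φV ≤ 0 := by
          rw [hRzz] at hF
          simpa using hF
        have : φV = 0 := frobNorm_eq_zero (le_antisymm hFz (frobNorm_nonneg _))
        rw [hS1def, this, specNorm_zero] at hS10
        exact hS10 rfl
    set E := (epsRank ε φV : ℝ) with hE
    have hE0 : 0 ≤ E := Nat.cast_nonneg _
    have hmain : E * (ε * S1) ^ 2 ≤ frobNorm φV ^ 2 := epsRank_mul_le ε hε φV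
    have hF2 : frobNorm φV ^ 2 ≤ (1 + C) ^ 2 * ((Q2 * Q1) ^ 2 * (n : ℝ)) := by
      have h1 : frobNorm φV ^ 2 ≤ ((1 + C) * R) ^ 2 :=
        pow_le_pow_left₀ (frobNorm_nonneg _) hF 2
      have h2 : ((1 + C) * R) ^ 2 ≤ ((1 + C) * ((Q2 * Q1) * frobNorm V)) ^ 2 := by
        apply pow_le_pow_left₀ (mul_nonneg (by linarith) hR0)
        exact mul_le_mul_of_nonneg_left hR (by linarith)
      calc frobNorm φV ^ 2 ≤ ((1 + C) * R) ^ 2 := h1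
        _ ≤ ((1 + C) * ((Q2 * Q1) * frobNorm V)) ^ 2 := h2
        _ = (1 + C) ^ 2 * ((Q2 * Q1) ^ 2 * frobNorm V ^ 2) := by ring
        _ = (1 + C) ^ 2 * ((Q2 * Q1) ^ 2 * (n : ℝ)) := by rw [hfrobV]
    have hSlow : (ε * (c * ((Q2 * Q1) * SV))) ^ 2 ≤ (ε * S1) ^ 2 := by
      apply pow_le_pow_left₀ (by positivity)
      apply mul_le_mul_of_nonneg_left _ hε.le
      calc c * ((Q2 * Q1) * SV) = c * (Q2 * Q1 * SV) := by ring
        _ ≤ S1 := hlow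
    have hchain : E * (ε * (c * ((Q2 * Q1) * SV))) ^ 2
        ≤ (1 + C) ^ 2 * ((Q2 * Q1) ^ 2 * ((ω : ℝ) * SV ^ 2)) := by
      calc E * (ε * (c * ((Q2 * Q1) * SV))) ^ 2 ≤ E * (ε * S1) ^ 2 :=
            mul_le_mul_of_nonneg_left hSlow hE0
        _ ≤ frobNorm φV ^ 2 := hmain
        _ ≤ (1 + C) ^ 2 * ((Q2 * Q1) ^ 2 * (n : ℝ)) := hF2
        _ ≤ (1 + C) ^ 2 * ((Q2 * Q1) ^ 2 * ((ω : ℝ) * SV ^ 2)) := by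
            apply mul_le_mul_of_nonneg_left _ (sq_nonneg _)
            exact mul_le_mul_of_nonneg_left hkey (sq_nonneg _)
    have hT : 0 < (Q2 * Q1) ^ 2 * SV ^ 2 := by positivity
    have hcancel : E * (ε * c) ^ 2 ≤ (1 + C) ^ 2 * (ω : ℝ) := by
      have h1 : (E * (ε * c) ^ 2) * ((Q2 * Q1) ^ 2 * SV ^ 2)
          ≤ ((1 + C) ^ 2 * (ω : ℝ)) * ((Q2 * Q1) ^ 2 * SV ^ 2) := by
        calc (E * (ε * c) ^ 2) * ((Q2 * Q1) ^ 2 * SV ^ 2)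
            = E * (ε * (c * ((Q2 * Q1) * SV))) ^ 2 := by ring
          _ ≤ (1 + C) ^ 2 * ((Q2 * Q1) ^ 2 * ((ω : ℝ) * SV ^ 2)) := hchain
          _ = ((1 + C) ^ 2 * (ω : ℝ)) * ((Q2 * Q1) ^ 2 * SV ^ 2) := by ring
      exact le_of_mul_le_mul_right h1 hT
    have hgoal : ((1 + C) / c) ^ 2 * ε⁻¹ ^ 2 * (ω : ℝ)
        = ((1 + C) ^ 2 * (ω : ℝ)) / ((ε * c) ^ 2) := by
      field_simp
    rw [hgoal, le_div_iff₀ (by positivity)]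
    exact hcancel
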